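/- For every p ≥ 1, β > 0, σ ∈ (1/2,1) and fields h ∈ ℝ^p, the thermodynamic limit of the hierarchical Hopfield model quenched free energy exists: the sequence k ↦ f_k(β,h,σ,p) converges to a finite limit f(β,h,σ,p) as k → ∞. -/
import Mathlib


open Real Filter

/-- The ±1 value of a Boolean spin. -/
noncomputable def spin (b : Bool) : ℝ := if b then 1 else -1

/-- Embedding of the first half of the sites. -/
def finLeft {k : ℕ} (i : Fin (2 ^ k)) : Fin (2 ^ (k + 1)) :=
  ⟨i.1, lt_of_lt_of_le i.2 (Nat.pow_le_pow_right (by norm_num) (Nat.le_succ k))⟩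

/-- Embedding of the second half of the sites. -/
def finRight {k : ℕ} (i : Fin (2 ^ k)) : Fin (2 ^ (k + 1)) :=
  ⟨i.1 + 2 ^ k, by
    have h2 : 2 ^ (k + 1) = 2 ^ k + 2 ^ k := by rw [pow_succ]; ring
    have := i.2; omega⟩

/-- The hierarchical Hopfield model Hamiltonian, defined recursively; `p` is the number
of patterns, `ξ` the pattern assignment, and the double sum over sites includes `i = j`. -/
noncomputable def hopH (σ : ℝ) (p : ℕ) :
    (k : ℕ) → (Fin (2 ^ k) → Bool) → (Fin p → Fin (2 ^ k) → Bool) → ℝ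
  | 0, _, _ => 0
  | (k + 1), S, ξ =>
      hopH σ p k (fun i => S (finLeft i)) (fun μ i => ξ μ (finLeft i)) +
        hopH σ p k (fun i => S (finRight i)) (fun μ i => ξ μ (finRight i)) -
        1 / (2 * (2 : ℝ) ^ (2 * σ * ((k : ℝ) + 1))) *
          ∑ μ : Fin p, ∑ i : Fin (2 ^ (k + 1)), ∑ j : Fin (2 ^ (k + 1)),
            spin (ξ μ i) * spin (ξ μ j) * spin (S i) * spin (S j)

/-- The quenched free energy of the hierarchical Hopfield model with external fields `h`:
the uniform average over the `2^(p·2^k)` pattern assignments of the log partition function,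
divided by the number `2^k` of spins. -/
noncomputable def hopF (β σ : ℝ) (p : ℕ) (h : Fin p → ℝ) (k : ℕ) : ℝ :=
  ((2 : ℝ) ^ k)⁻¹ * (((2 : ℝ) ^ (p * 2 ^ k))⁻¹ *
    ∑ ξ : Fin p → Fin (2 ^ k) → Bool,
      Real.log (∑ S : Fin (2 ^ k) → Bool,
        Real.exp (-β * hopH σ p k S ξ + β * ∑ μ, h μ * ∑ i, spin (ξ μ i) * spin (S i))))

/-! ### Auxiliary lemmas -/

lemma spin_abs (b : Bool) : |spin b| = 1 := by
  cases b <;> simp [spin]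

/-- The sum decomposition of `Fin (2^(k+1))`. -/
noncomputable def halfEquiv (k : ℕ) : Fin (2 ^ k) ⊕ Fin (2 ^ k) ≃ Fin (2 ^ (k + 1)) :=
  Equiv.ofBijective (Sum.elim finLeft finRight) (by
    rw [Fintype.bijective_iff_injective_and_card]
    refine ⟨?_, by simp [pow_succ]; ring⟩
    rintro (a | a) (b | b) hab <;>
      simp only [Sum.elim_inl, Sum.elim_inr, finLeft, finRight, Fin.mk.injEq] at hab
    · exact congrArg Sum.inl (Fin.ext hab)
    · exact absurd hab (by have := a.2; omega)
    · exact absurd hab (by have := b.2; omega)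
    · exact congrArg Sum.inr (Fin.ext (by omega)))

lemma halfEquiv_inl {k : ℕ} (i : Fin (2 ^ k)) : halfEquiv k (Sum.inl i) = finLeft i := rfl

lemma halfEquiv_inr {k : ℕ} (i : Fin (2 ^ k)) : halfEquiv k (Sum.inr i) = finRight i := rfl

lemma halfEquiv_symm_inl {k : ℕ} (i : Fin (2 ^ k)) :
    (halfEquiv k).symm (finLeft i) = Sum.inl i := by
  rw [Equiv.symm_apply_eq]; rfl

lemma halfEquiv_symm_inr {k : ℕ} (i : Fin (2 ^ k)) :
    (halfEquiv k).symm (finRight i) = Sum.inr i := by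
  rw [Equiv.symm_apply_eq]; rfl

lemma sum_split {k : ℕ} {M : Type*} [AddCommMonoid M] (f : Fin (2 ^ (k + 1)) → M) :
    ∑ j, f j = (∑ i, f (finLeft i)) + ∑ i, f (finRight i) := by
  rw [← Equiv.sum_comp (halfEquiv k) f, Fintype.sum_sum_type]
  rfl

/-- Splitting a spin configuration into its two halves. -/
noncomputable def spinSplit (k : ℕ) :
    (Fin (2 ^ (k + 1)) → Bool) ≃ (Fin (2 ^ k) → Bool) × (Fin (2 ^ k) → Bool) where
  toFun S := (fun i => S (finLeft i), fun i => S (finRight i))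
  invFun P := fun j => Sum.elim P.1 P.2 ((halfEquiv k).symm j)
  left_inv S := by
    funext j
    obtain ⟨x, rfl⟩ := (halfEquiv k).surjective j
    cases x <;> simp [halfEquiv_symm_inl, halfEquiv_symm_inr, halfEquiv_inl, halfEquiv_inr]
  right_inv P := by
    ext i <;> simp [halfEquiv_symm_inl, halfEquiv_symm_inr]

lemma spinSplit_symm_left {k : ℕ} (P : (Fin (2 ^ k) → Bool) × (Fin (2 ^ k) → Bool))
    (i : Fin (2 ^ k)) : (spinSplit k).symm P (finLeft i) = P.1 i := by
  simp [spinSplit, halfEquiv_symm_inl]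

lemma spinSplit_symm_right {k : ℕ} (P : (Fin (2 ^ k) → Bool) × (Fin (2 ^ k) → Bool))
    (i : Fin (2 ^ k)) : (spinSplit k).symm P (finRight i) = P.2 i := by
  simp [spinSplit, halfEquiv_symm_inr]

/-- Splitting a pattern assignment into its two halves. -/
noncomputable def xiSplit (p k : ℕ) :
    (Fin p → Fin (2 ^ (k + 1)) → Bool) ≃
      (Fin p → Fin (2 ^ k) → Bool) × (Fin p → Fin (2 ^ k) → Bool) where
  toFun ξ := (fun μ i => ξ μ (finLeft i), fun μ i => ξ μ (finRight i))
  invFun P := fun μ j => Sum.elim (P.1 μ) (P.2 μ) ((halfEquiv k).symm j)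
  left_inv ξ := by
    funext μ j
    obtain ⟨x, rfl⟩ := (halfEquiv k).surjective j
    cases x <;> simp [halfEquiv_symm_inl, halfEquiv_symm_inr, halfEquiv_inl, halfEquiv_inr]
  right_inv P := by
    ext μ i <;> simp [halfEquiv_symm_inl, halfEquiv_symm_inr]

lemma xiSplit_symm_left {p k : ℕ}
    (P : (Fin p → Fin (2 ^ k) → Bool) × (Fin p → Fin (2 ^ k) → Bool))
    (μ : Fin p) (i : Fin (2 ^ k)) : (xiSplit p k).symm P μ (finLeft i) = P.1 μ i := by
  simp [xiSplit, halfEquiv_symm_inl]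

lemma xiSplit_symm_right {p k : ℕ}
    (P : (Fin p → Fin (2 ^ k) → Bool) × (Fin p → Fin (2 ^ k) → Bool))
    (μ : Fin p) (i : Fin (2 ^ k)) : (xiSplit p k).symm P μ (finRight i) = P.2 μ i := by
  simp [xiSplit, halfEquiv_symm_inr]

/-! ### The partition function -/

/-- The partition function at level `k`. -/
noncomputable def Zf (β σ : ℝ) (p : ℕ) (h : Fin p → ℝ) (k : ℕ)
    (ξ : Fin p → Fin (2 ^ k) → Bool) : ℝ :=
  ∑ S : Fin (2 ^ k) → Bool,
    Real.exp (-β * hopH σ p k S ξ + β * ∑ μ, h μ * ∑ i, spin (ξ μ i) * spin (S i))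

lemma Zf_pos (β σ : ℝ) (p : ℕ) (h : Fin p → ℝ) (k : ℕ) (ξ : Fin p → Fin (2 ^ k) → Bool) :
    0 < Zf β σ p h k ξ :=
  Finset.sum_pos (fun _ _ => Real.exp_pos _) ⟨fun _ => true, Finset.mem_univ _⟩

lemma hopF_eq (β σ : ℝ) (p : ℕ) (h : Fin p → ℝ) (k : ℕ) :
    hopF β σ p h k =
      ((2 : ℝ) ^ k)⁻¹ * (((2 : ℝ) ^ (p * 2 ^ k))⁻¹ *
        ∑ ξ : Fin p → Fin (2 ^ k) → Bool, Real.log (Zf β σ p h k ξ)) := rfl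

/-! ### Bounds on the interaction term -/

lemma interaction_eq (k : ℕ) {p : ℕ} (ξ : Fin p → Fin (2 ^ (k + 1)) → Bool)
    (S : Fin (2 ^ (k + 1)) → Bool) :
    (∑ μ : Fin p, ∑ i : Fin (2 ^ (k + 1)), ∑ j : Fin (2 ^ (k + 1)),
        spin (ξ μ i) * spin (ξ μ j) * spin (S i) * spin (S j)) =
      ∑ μ : Fin p, (∑ i : Fin (2 ^ (k + 1)), spin (ξ μ i) * spin (S i)) ^ 2 := by
  refine Finset.sum_congr rfl fun μ _ => ?_
  rw [sq, Finset.sum_mul_sum]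
  refine Finset.sum_congr rfl fun i _ => Finset.sum_congr rfl fun j _ => by ring

lemma interaction_nonneg (k : ℕ) {p : ℕ} (ξ : Fin p → Fin (2 ^ (k + 1)) → Bool)
    (S : Fin (2 ^ (k + 1)) → Bool) :
    0 ≤ ∑ μ : Fin p, ∑ i : Fin (2 ^ (k + 1)), ∑ j : Fin (2 ^ (k + 1)),
        spin (ξ μ i) * spin (ξ μ j) * spin (S i) * spin (S j) := by
  rw [interaction_eq]
  exact Finset.sum_nonneg fun μ _ => sq_nonneg _

lemma interaction_le (k : ℕ) {p : ℕ} (ξ : Fin p → Fin (2 ^ (k + 1)) → Bool)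
    (S : Fin (2 ^ (k + 1)) → Bool) :
    (∑ μ : Fin p, ∑ i : Fin (2 ^ (k + 1)), ∑ j : Fin (2 ^ (k + 1)),
        spin (ξ μ i) * spin (ξ μ j) * spin (S i) * spin (S j)) ≤
      (p : ℝ) * ((2 : ℝ) ^ (k + 1)) ^ 2 := by
  rw [interaction_eq]
  have hb : ∀ μ : Fin p, (∑ i : Fin (2 ^ (k + 1)), spin (ξ μ i) * spin (S i)) ^ 2 ≤
      ((2 : ℝ) ^ (k + 1)) ^ 2 := by
    intro μ
    have habs : |∑ i : Fin (2 ^ (k + 1)), spin (ξ μ i) * spin (S i)| ≤ (2 : ℝ) ^ (k + 1) := by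
      calc |∑ i : Fin (2 ^ (k + 1)), spin (ξ μ i) * spin (S i)|
          ≤ ∑ i : Fin (2 ^ (k + 1)), |spin (ξ μ i) * spin (S i)| :=
            Finset.abs_sum_le_sum_abs _ _
        _ = ∑ _i : Fin (2 ^ (k + 1)), (1 : ℝ) := by
            refine Finset.sum_congr rfl fun i _ => ?_
            rw [abs_mul, spin_abs, spin_abs, mul_one]
        _ = (2 : ℝ) ^ (k + 1) := by
            simp [Finset.card_univ]
    calc (∑ i : Fin (2 ^ (k + 1)), spin (ξ μ i) * spin (S i)) ^ 2
        = |∑ i : Fin (2 ^ (k + 1)), spin (ξ μ i) * spin (S i)| ^ 2 := (sq_abs _).symm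
      _ ≤ ((2 : ℝ) ^ (k + 1)) ^ 2 := by
          have h2 : (0:ℝ) ≤ (2 : ℝ) ^ (k + 1) := by positivity
          exact pow_le_pow_left₀ (abs_nonneg _) habs 2
  calc (∑ μ : Fin p, (∑ i : Fin (2 ^ (k + 1)), spin (ξ μ i) * spin (S i)) ^ 2)
      ≤ ∑ _μ : Fin p, ((2 : ℝ) ^ (k + 1)) ^ 2 := Finset.sum_le_sum fun μ _ => hb μ
    _ = (p : ℝ) * ((2 : ℝ) ^ (k + 1)) ^ 2 := by
        rw [Finset.sum_const, Finset.card_univ, Fintype.card_fin, nsmul_eq_mul]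

/-! ### Energy splitting -/

/-- The energy (exponent in the Boltzmann weight). -/
noncomputable def ener (β σ : ℝ) (p : ℕ) (h : Fin p → ℝ) (k : ℕ)
    (ξ : Fin p → Fin (2 ^ k) → Bool) (S : Fin (2 ^ k) → Bool) : ℝ :=
  -β * hopH σ p k S ξ + β * ∑ μ, h μ * ∑ i, spin (ξ μ i) * spin (S i)

lemma Zf_def (β σ : ℝ) (p : ℕ) (h : Fin p → ℝ) (k : ℕ) (ξ : Fin p → Fin (2 ^ k) → Bool) :
    Zf β σ p h k ξ = ∑ S : Fin (2 ^ k) → Bool, Real.exp (ener β σ p h k ξ S) := rfl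

section Main

variable (β σ : ℝ) (p : ℕ) (h : Fin p → ℝ)

/-- The error term in the energy splitting. -/
noncomputable def errD (β σ : ℝ) (p k : ℕ) : ℝ :=
  β * (1 / (2 * (2 : ℝ) ^ (2 * σ * ((k : ℝ) + 1))) * ((p : ℝ) * ((2 : ℝ) ^ (k + 1)) ^ 2))

lemma ener_split (k : ℕ) (ξ : Fin p → Fin (2 ^ (k + 1)) → Bool) (S : Fin (2 ^ (k + 1)) → Bool) :
    ener β σ p h (k + 1) ξ S =
      ener β σ p h k (fun μ i => ξ μ (finLeft i)) (fun i => S (finLeft i)) +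
        ener β σ p h k (fun μ i => ξ μ (finRight i)) (fun i => S (finRight i)) +
        β * (1 / (2 * (2 : ℝ) ^ (2 * σ * ((k : ℝ) + 1))) *
          ∑ μ : Fin p, ∑ i : Fin (2 ^ (k + 1)), ∑ j : Fin (2 ^ (k + 1)),
            spin (ξ μ i) * spin (ξ μ j) * spin (S i) * spin (S j)) := by
  have hfield : (∑ μ, h μ * ∑ i : Fin (2 ^ (k + 1)), spin (ξ μ i) * spin (S i)) =
      (∑ μ, h μ * ∑ i : Fin (2 ^ k), spin (ξ μ (finLeft i)) * spin (S (finLeft i))) +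
        ∑ μ, h μ * ∑ i : Fin (2 ^ k), spin (ξ μ (finRight i)) * spin (S (finRight i)) := by
    rw [← Finset.sum_add_distrib]
    refine Finset.sum_congr rfl fun μ _ => ?_
    rw [← mul_add, sum_split (fun i => spin (ξ μ i) * spin (S i))]
  simp only [ener, hopH]
  rw [hfield]
  ring

variable {β}

lemma ener_between (hβ : 0 < β) (k : ℕ) (ξ : Fin p → Fin (2 ^ (k + 1)) → Bool)
    (S1 S2 : Fin (2 ^ k) → Bool) :
    ener β σ p h k (fun μ i => ξ μ (finLeft i)) S1 +
        ener β σ p h k (fun μ i => ξ μ (finRight i)) S2 ≤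
      ener β σ p h (k + 1) ξ ((spinSplit k).symm (S1, S2)) ∧
    ener β σ p h (k + 1) ξ ((spinSplit k).symm (S1, S2)) ≤
      ener β σ p h k (fun μ i => ξ μ (finLeft i)) S1 +
        ener β σ p h k (fun μ i => ξ μ (finRight i)) S2 + errD β σ p k := by
  have hL : (fun i => (spinSplit k).symm (S1, S2) (finLeft i)) = S1 :=
    funext fun i => spinSplit_symm_left (S1, S2) i
  have hR : (fun i => (spinSplit k).symm (S1, S2) (finRight i)) = S2 :=
    funext fun i => spinSplit_symm_right (S1, S2) i
  have hsplit := ener_split β σ p h k ξ ((spinSplit k).symm (S1, S2))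
  rw [hL, hR] at hsplit
  have hcpos : (0 : ℝ) < 1 / (2 * (2 : ℝ) ^ (2 * σ * ((k : ℝ) + 1))) := by
    have := Real.rpow_pos_of_pos (by norm_num : (0:ℝ) < 2) (2 * σ * ((k : ℝ) + 1))
    positivity
  constructor
  · rw [hsplit]
    have : 0 ≤ β * (1 / (2 * (2 : ℝ) ^ (2 * σ * ((k : ℝ) + 1))) *
        ∑ μ : Fin p, ∑ i : Fin (2 ^ (k + 1)), ∑ j : Fin (2 ^ (k + 1)),
          spin (ξ μ i) * spin (ξ μ j) * spin ((spinSplit k).symm (S1, S2) i) *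
            spin ((spinSplit k).symm (S1, S2) j)) := by
      have := interaction_nonneg k ξ ((spinSplit k).symm (S1, S2))
      positivity
    linarith
  · rw [hsplit]
    have hle := interaction_le k ξ ((spinSplit k).symm (S1, S2))
    have : β * (1 / (2 * (2 : ℝ) ^ (2 * σ * ((k : ℝ) + 1))) *
        ∑ μ : Fin p, ∑ i : Fin (2 ^ (k + 1)), ∑ j : Fin (2 ^ (k + 1)),
          spin (ξ μ i) * spin (ξ μ j) * spin ((spinSplit k).symm (S1, S2) i) *
            spin ((spinSplit k).symm (S1, S2) j)) ≤ errD β σ p k := by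
      rw [errD]
      have h1 : (0:ℝ) ≤ β := hβ.le
      have h2 : (0:ℝ) ≤ 1 / (2 * (2 : ℝ) ^ (2 * σ * ((k : ℝ) + 1))) := hcpos.le
      exact mul_le_mul_of_nonneg_left (mul_le_mul_of_nonneg_left hle h2) h1
    linarith

lemma Zf_between (hβ : 0 < β) (k : ℕ) (ξ : Fin p → Fin (2 ^ (k + 1)) → Bool) :
    Zf β σ p h k (fun μ i => ξ μ (finLeft i)) * Zf β σ p h k (fun μ i => ξ μ (finRight i)) ≤
      Zf β σ p h (k + 1) ξ ∧
    Zf β σ p h (k + 1) ξ ≤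
      Zf β σ p h k (fun μ i => ξ μ (finLeft i)) * Zf β σ p h k (fun μ i => ξ μ (finRight i)) *
        Real.exp (errD β σ p k) := by
  have hZ : Zf β σ p h (k + 1) ξ =
      ∑ P : (Fin (2 ^ k) → Bool) × (Fin (2 ^ k) → Bool),
        Real.exp (ener β σ p h (k + 1) ξ ((spinSplit k).symm P)) := by
    rw [Zf_def]
    exact (Equiv.sum_comp (spinSplit k).symm
      (fun S => Real.exp (ener β σ p h (k + 1) ξ S))).symm
  have hprod : Zf β σ p h k (fun μ i => ξ μ (finLeft i)) *
      Zf β σ p h k (fun μ i => ξ μ (finRight i)) =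
      ∑ P : (Fin (2 ^ k) → Bool) × (Fin (2 ^ k) → Bool),
        Real.exp (ener β σ p h k (fun μ i => ξ μ (finLeft i)) P.1 +
          ener β σ p h k (fun μ i => ξ μ (finRight i)) P.2) := by
    rw [Zf_def, Zf_def, Finset.sum_mul_sum, Fintype.sum_prod_type]
    exact Finset.sum_congr rfl fun S1 _ => Finset.sum_congr rfl fun S2 _ =>
      (Real.exp_add _ _).symm
  constructor
  · rw [hZ, hprod]
    refine Finset.sum_le_sum fun P _ => Real.exp_le_exp.mpr ?_
    exact (ener_between σ p h hβ k ξ P.1 P.2).1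
  · rw [hZ, hprod, Finset.sum_mul]
    refine Finset.sum_le_sum fun P _ => ?_
    rw [← Real.exp_add]
    exact Real.exp_le_exp.mpr (ener_between σ p h hβ k ξ P.1 P.2).2

lemma logZ_between (hβ : 0 < β) (k : ℕ) (ξ : Fin p → Fin (2 ^ (k + 1)) → Bool) :
    Real.log (Zf β σ p h k (fun μ i => ξ μ (finLeft i))) +
        Real.log (Zf β σ p h k (fun μ i => ξ μ (finRight i))) ≤
      Real.log (Zf β σ p h (k + 1) ξ) ∧
    Real.log (Zf β σ p h (k + 1) ξ) ≤
      Real.log (Zf β σ p h k (fun μ i => ξ μ (finLeft i))) +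
        Real.log (Zf β σ p h k (fun μ i => ξ μ (finRight i))) + errD β σ p k := by
  obtain ⟨h1, h2⟩ := Zf_between σ p h hβ k ξ
  have pL := Zf_pos β σ p h k (fun μ i => ξ μ (finLeft i))
  have pR := Zf_pos β σ p h k (fun μ i => ξ μ (finRight i))
  constructor
  · calc Real.log (Zf β σ p h k (fun μ i => ξ μ (finLeft i))) +
        Real.log (Zf β σ p h k (fun μ i => ξ μ (finRight i)))
        = Real.log (Zf β σ p h k (fun μ i => ξ μ (finLeft i)) *
            Zf β σ p h k (fun μ i => ξ μ (finRight i))) :=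
          (Real.log_mul pL.ne' pR.ne').symm
      _ ≤ Real.log (Zf β σ p h (k + 1) ξ) :=
          Real.log_le_log (by positivity) h1
  · calc Real.log (Zf β σ p h (k + 1) ξ)
        ≤ Real.log (Zf β σ p h k (fun μ i => ξ μ (finLeft i)) *
            Zf β σ p h k (fun μ i => ξ μ (finRight i)) * Real.exp (errD β σ p k)) :=
          Real.log_le_log (Zf_pos _ _ _ _ _ _) h2
      _ = Real.log (Zf β σ p h k (fun μ i => ξ μ (finLeft i))) +
            Real.log (Zf β σ p h k (fun μ i => ξ μ (finRight i))) + errD β σ p k := by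
          rw [Real.log_mul (by positivity) (Real.exp_pos _).ne',
            Real.log_mul pL.ne' pR.ne', Real.log_exp]

end Main

section Average

variable {β : ℝ} (σ : ℝ) (p : ℕ) (h : Fin p → ℝ)

lemma card_small (p k : ℕ) :
    (Fintype.card (Fin p → Fin (2 ^ k) → Bool) : ℝ) = (2 : ℝ) ^ (p * 2 ^ k) := by
  rw [Fintype.card_fun, Fintype.card_fun, Fintype.card_bool, Fintype.card_fin, Fintype.card_fin]
  push_cast
  rw [← pow_mul, mul_comm]

lemma sum_big_between (hβ : 0 < β) (k : ℕ) :
    2 * (2 : ℝ) ^ (p * 2 ^ k) * (∑ ξ : Fin p → Fin (2 ^ k) → Bool, Real.log (Zf β σ p h k ξ)) ≤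
      (∑ ξ : Fin p → Fin (2 ^ (k + 1)) → Bool, Real.log (Zf β σ p h (k + 1) ξ)) ∧
    (∑ ξ : Fin p → Fin (2 ^ (k + 1)) → Bool, Real.log (Zf β σ p h (k + 1) ξ)) ≤
      2 * (2 : ℝ) ^ (p * 2 ^ k) *
          (∑ ξ : Fin p → Fin (2 ^ k) → Bool, Real.log (Zf β σ p h k ξ)) +
        ((2 : ℝ) ^ (p * 2 ^ k)) ^ 2 * errD β σ p k := by
  set A := Fin p → Fin (2 ^ k) → Bool
  set f : A → ℝ := fun ξ => Real.log (Zf β σ p h k ξ) with hf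
  have hbig : (∑ ξ : Fin p → Fin (2 ^ (k + 1)) → Bool, Real.log (Zf β σ p h (k + 1) ξ)) =
      ∑ P : A × A, Real.log (Zf β σ p h (k + 1) ((xiSplit p k).symm P)) :=
    (Equiv.sum_comp (xiSplit p k).symm
      (fun ξ => Real.log (Zf β σ p h (k + 1) ξ))).symm
  have hrestr : ∀ P : A × A,
      (fun μ i => (xiSplit p k).symm P μ (finLeft i)) = P.1 ∧
      (fun μ i => (xiSplit p k).symm P μ (finRight i)) = P.2 := by
    intro P
    exact ⟨funext fun μ => funext fun i => xiSplit_symm_left P μ i,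
      funext fun μ => funext fun i => xiSplit_symm_right P μ i⟩
  have hterm : ∀ P : A × A,
      f P.1 + f P.2 ≤ Real.log (Zf β σ p h (k + 1) ((xiSplit p k).symm P)) ∧
      Real.log (Zf β σ p h (k + 1) ((xiSplit p k).symm P)) ≤ f P.1 + f P.2 + errD β σ p k := by
    intro P
    have := logZ_between σ p h hβ k ((xiSplit p k).symm P)
    rw [(hrestr P).1, (hrestr P).2] at this
    exact this
  have hsum : (∑ P : A × A, (f P.1 + f P.2)) =
      2 * (2 : ℝ) ^ (p * 2 ^ k) * ∑ ξ : A, f ξ := by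
    rw [Finset.sum_add_distrib]
    have h1 : (∑ P : A × A, f P.1) = (Fintype.card A : ℝ) * ∑ ξ : A, f ξ := by
      rw [Fintype.sum_prod_type]
      simp [Finset.sum_const, Finset.card_univ, nsmul_eq_mul, Finset.mul_sum, mul_comm]
    have h2 : (∑ P : A × A, f P.2) = (Fintype.card A : ℝ) * ∑ ξ : A, f ξ := by
      rw [Fintype.sum_prod_type]
      simp [Finset.sum_const, Finset.card_univ, nsmul_eq_mul, Finset.mul_sum]
    rw [h1, h2, card_small]
    ring
  have hcardsq : (∑ _P : A × A, errD β σ p k) =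
      ((2 : ℝ) ^ (p * 2 ^ k)) ^ 2 * errD β σ p k := by
    rw [Finset.sum_const, Finset.card_univ, nsmul_eq_mul, Fintype.card_prod]
    push_cast
    rw [card_small]
    ring
  constructor
  · rw [hbig, ← hsum]
    exact Finset.sum_le_sum fun P _ => (hterm P).1
  · rw [hbig]
    calc (∑ P : A × A, Real.log (Zf β σ p h (k + 1) ((xiSplit p k).symm P)))
        ≤ ∑ P : A × A, (f P.1 + f P.2 + errD β σ p k) :=
          Finset.sum_le_sum fun P _ => (hterm P).2
      _ = 2 * (2 : ℝ) ^ (p * 2 ^ k) * (∑ ξ : A, f ξ) +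
            ((2 : ℝ) ^ (p * 2 ^ k)) ^ 2 * errD β σ p k := by
          rw [Finset.sum_add_distrib, hsum, hcardsq]

lemma hopF_succ (hβ : 0 < β) (k : ℕ) :
    hopF β σ p h k ≤ hopF β σ p h (k + 1) ∧
    hopF β σ p h (k + 1) ≤ hopF β σ p h k + errD β σ p k / 2 ^ (k + 1) := by
  obtain ⟨hlow, hup⟩ := sum_big_between σ p h hβ k
  set M : ℝ := (2 : ℝ) ^ (p * 2 ^ k) with hM
  set Ssm : ℝ := ∑ ξ : Fin p → Fin (2 ^ k) → Bool, Real.log (Zf β σ p h k ξ) with hSsm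
  set Sbg : ℝ := ∑ ξ : Fin p → Fin (2 ^ (k + 1)) → Bool, Real.log (Zf β σ p h (k + 1) ξ) with hSbg
  have hMpos : (0 : ℝ) < M := by positivity
  have h2k : (0 : ℝ) < (2 : ℝ) ^ k := by positivity
  have h2k1 : (0 : ℝ) < (2 : ℝ) ^ (k + 1) := by positivity
  have hFk : hopF β σ p h k = ((2 : ℝ) ^ k)⁻¹ * (M⁻¹ * Ssm) := hopF_eq β σ p h k
  have hFk1 : hopF β σ p h (k + 1) = ((2 : ℝ) ^ (k + 1))⁻¹ * ((M ^ 2)⁻¹ * Sbg) := by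
    rw [hopF_eq]
    have he : p * 2 ^ (k + 1) = p * 2 ^ k * 2 := by rw [pow_succ]; ring
    rw [he, pow_mul]
  constructor
  · rw [hFk, hFk1]
    calc ((2 : ℝ) ^ k)⁻¹ * (M⁻¹ * Ssm)
        = ((2 : ℝ) ^ (k + 1))⁻¹ * ((M ^ 2)⁻¹ * (2 * M * Ssm)) := by
          rw [pow_succ]
          field_simp
      _ ≤ ((2 : ℝ) ^ (k + 1))⁻¹ * ((M ^ 2)⁻¹ * Sbg) := by
          have := mul_le_mul_of_nonneg_left hlow (by positivity : (0:ℝ) ≤ (M ^ 2)⁻¹)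
          exact mul_le_mul_of_nonneg_left this (by positivity)
  · rw [hFk, hFk1]
    calc ((2 : ℝ) ^ (k + 1))⁻¹ * ((M ^ 2)⁻¹ * Sbg)
        ≤ ((2 : ℝ) ^ (k + 1))⁻¹ * ((M ^ 2)⁻¹ * (2 * M * Ssm + M ^ 2 * errD β σ p k)) := by
          have := mul_le_mul_of_nonneg_left hup (by positivity : (0:ℝ) ≤ (M ^ 2)⁻¹)
          exact mul_le_mul_of_nonneg_left this (by positivity)
      _ = ((2 : ℝ) ^ k)⁻¹ * (M⁻¹ * Ssm) + errD β σ p k / 2 ^ (k + 1) := by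
          rw [pow_succ]
          field_simp

lemma errD_div (hσ : σ ∈ Set.Ioo (1 / 2 : ℝ) 1) (k : ℕ) :
    errD β σ p k / 2 ^ (k + 1) =
      (β * p / 2) * ((2 : ℝ) ^ ((1 : ℝ) - 2 * σ)) ^ (k + 1) := by
  have hN : (2 : ℝ) ^ (k + 1) = (2 : ℝ) ^ (((k : ℝ) + 1) : ℝ) := by
    rw [← Real.rpow_natCast (2 : ℝ) (k + 1)]
    push_cast
    ring_nf
  have hr : ((2 : ℝ) ^ ((1 : ℝ) - 2 * σ)) ^ (k + 1) =
      (2 : ℝ) ^ (((k : ℝ) + 1) : ℝ) / (2 : ℝ) ^ (2 * σ * ((k : ℝ) + 1)) := by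
    rw [← Real.rpow_natCast ((2 : ℝ) ^ ((1 : ℝ) - 2 * σ)) (k + 1),
      ← Real.rpow_mul (by norm_num : (0 : ℝ) ≤ 2)]
    push_cast
    rw [show ((1 : ℝ) - 2 * σ) * ((k : ℝ) + 1) = ((k : ℝ) + 1) - 2 * σ * ((k : ℝ) + 1) by ring,
      Real.rpow_sub (by norm_num : (0 : ℝ) < 2)]
  have hT : (0 : ℝ) < (2 : ℝ) ^ (2 * σ * ((k : ℝ) + 1)) :=
    Real.rpow_pos_of_pos (by norm_num) _
  have hNpos : (0 : ℝ) < (2 : ℝ) ^ (((k : ℝ) + 1) : ℝ) :=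
    Real.rpow_pos_of_pos (by norm_num) _
  rw [errD, hr, hN]
  field_simp

end Average

/-- existence of the thermodynamic limit of the HHM quenched free energy. -/
theorem hopfield_free_energy_limit_exists (p : ℕ) (hp : 1 ≤ p) (β σ : ℝ) (h : Fin p → ℝ)
    (hβ : 0 < β) (hσ : σ ∈ Set.Ioo (1 / 2 : ℝ) 1) :
    ∃ F : ℝ, Tendsto (fun k => hopF β σ p h k) atTop (nhds F) := by
  set r : ℝ := (2 : ℝ) ^ ((1 : ℝ) - 2 * σ) with hrdef
  have hr0 : 0 < r := Real.rpow_pos_of_pos (by norm_num) _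
  have hr1 : r < 1 := by
    apply Real.rpow_lt_one_of_one_lt_of_neg (by norm_num)
    obtain ⟨h1, _⟩ := hσ
    linarith
  set C : ℝ := β * p / 2 with hCdef
  have hC : 0 ≤ C := by positivity
  have hmono : Monotone (fun k => hopF β σ p h k) :=
    monotone_nat_of_le_succ fun k => (hopF_succ σ p h hβ k).1
  have hstep : ∀ k, hopF β σ p h (k + 1) ≤ hopF β σ p h k + C * r ^ (k + 1) := by
    intro k
    have := (hopF_succ σ p h hβ k).2
    rwa [errD_div σ p hσ k] at this
  have hbd : ∀ k, hopF β σ p h k ≤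
      hopF β σ p h 0 + C * ∑ j ∈ Finset.range k, r ^ (j + 1) := by
    intro k
    induction k with
    | zero => simp
    | succ k ih =>
        calc hopF β σ p h (k + 1) ≤ hopF β σ p h k + C * r ^ (k + 1) := hstep k
          _ ≤ hopF β σ p h 0 + C * (∑ j ∈ Finset.range k, r ^ (j + 1)) + C * r ^ (k + 1) := by
              linarith
          _ = hopF β σ p h 0 + C * ∑ j ∈ Finset.range (k + 1), r ^ (j + 1) := by
              rw [Finset.sum_range_succ]
              ring
  have hgeom : ∀ k, (∑ j ∈ Finset.range k, r ^ (j + 1)) ≤ (1 - r)⁻¹ := by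
    intro k
    calc (∑ j ∈ Finset.range k, r ^ (j + 1))
        ≤ ∑ j ∈ Finset.range k, r ^ j :=
          Finset.sum_le_sum fun j _ =>
            pow_le_pow_of_le_one hr0.le hr1.le (Nat.le_succ j)
      _ ≤ ∑' j : ℕ, r ^ j :=
          Summable.sum_le_tsum _ (fun j _ => pow_nonneg hr0.le j)
            (summable_geometric_of_lt_one hr0.le hr1)
      _ = (1 - r)⁻¹ := tsum_geometric_of_lt_one hr0.le hr1
  have hbdd : BddAbove (Set.range fun k => hopF β σ p h k) := by
    refine ⟨hopF β σ p h 0 + C * (1 - r)⁻¹, ?_⟩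
    rintro x ⟨k, rfl⟩
    calc hopF β σ p h k ≤ hopF β σ p h 0 + C * ∑ j ∈ Finset.range k, r ^ (j + 1) := hbd k
      _ ≤ hopF β σ p h 0 + C * (1 - r)⁻¹ := by
          have := mul_le_mul_of_nonneg_left (hgeom k) hC
          linarith
  exact ⟨_, tendsto_atTop_ciSup hmono hbdd⟩
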